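/- Consequence of sharpness: no uniform bound of the form J^{π_R}(x) − V*(x) ≤ C ε can hold over all SSPs with a universal constant C independent of the rollout hitting time. Precisely, for every C ≥ 0 there exist a deterministic SSP, an initial state x, an ε > 0, and a bounded V with V(t) = 0 and ‖V − V*‖∞ ≤ ε, such that the rollout policy π_R built from V is proper from x and J^{π_R}(x) − V*(x) > C ε. -/

import Mathlib

/-!
Charge cost `1` for every move that does not land in the terminal state `t`, and let every
state have a free move to `t`. Then `V* = 0`, while the surrogate `V = -1` off `t` is within
`ε = 1` of `V*` and makes every control greedy, since `f(y, u) + V(F(y, u)) = 0` for all `y, u`.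
The rollout policy may therefore walk along a chain of length `m` before terminating, paying
`m - 1`, and `m` can be taken larger than `C + 1`.
-/

open MeasureTheory ProbabilityTheory Filter
open scoped ENNReal

/-- Deterministic closed-loop trajectory: `x₀ = x`, `x_{k+1} = F(x_k, π(x_k))`. -/
def detTraj {X U : Type*} (F : X → U → X) (π : X → U) (x : X) : ℕ → X
  | 0 => x
  | k + 1 => F (detTraj F π x k) (π (detTraj F π x k))

open Finset

section ArrivalCost

variable {X U : Type*} [DecidableEq X] (F : X → U → X) (t : X)

def arrivalCost (y : X) (u : U) : ℝ := if F y u = t then 0 else 1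

def arrivalBonus (y : X) : ℝ := if y = t then 0 else -1

variable {F t}

lemma arrivalCost_nonneg (y : X) (u : U) : 0 ≤ arrivalCost F t y u := by
  unfold arrivalCost; split_ifs <;> norm_num

lemma arrivalCost_eq_zero {y : X} {u : U} (h : F y u = t) : arrivalCost F t y u = 0 :=
  if_pos h

lemma arrivalCost_add_arrivalBonus (y : X) (u : U) :
    arrivalCost F t y u + arrivalBonus t (F y u) = 0 := by
  unfold arrivalCost arrivalBonus; split_ifs <;> norm_num

lemma abs_arrivalBonus_le_one (y : X) : |arrivalBonus t y| ≤ 1 := by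
  unfold arrivalBonus; split_ifs <;> norm_num

lemma iInf_arrivalCost_eq_zero {S : Set U} {y : X} {u₀ : U} (hu₀ : u₀ ∈ S)
    (h : F y u₀ = t) : ⨅ u : S, arrivalCost F t y u = 0 :=
  le_antisymm
    ((ciInf_le ⟨0, by rintro _ ⟨u, rfl⟩; exact arrivalCost_nonneg y (u : U)⟩ ⟨u₀, hu₀⟩).trans_eq
      (arrivalCost_eq_zero h))
    (have : Nonempty S := ⟨⟨u₀, hu₀⟩⟩; le_ciInf fun u => arrivalCost_nonneg y (u : U))

/-- Along a trajectory with hitting time `n`, every move but the last one is charged. -/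
lemma sum_arrivalCost_detTraj {π : X → U} {x : X} {n : ℕ} (hn : detTraj F π x n = t)
    (hlt : ∀ k < n, detTraj F π x k ≠ t) :
    ∑ k ∈ range n, arrivalCost F t (detTraj F π x k) (π (detTraj F π x k)) = (n - 1 : ℕ) := by
  cases n with
  | zero => simp
  | succ m =>
    have hstep : ∀ k, arrivalCost F t (detTraj F π x k) (π (detTraj F π x k))
        = if detTraj F π x (k + 1) = t then 0 else 1 := fun _ => rfl
    simp only [hstep, sum_range_succ, hn, if_true]
    rw [sum_congr rfl fun k hk => if_neg (hlt (k + 1) (by simpa using hk))]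
    simp

end ArrivalCost

/-- Control `true` advances along `1 → 2 → ⋯ → m`, the wrap-around of `Fin (m + 1)` sending `m` to
the terminal state `0`; control `false` stops. -/
def chainStep (m : ℕ) (y : Fin (m + 1)) (u : Bool) : Fin (m + 1) :=
  if u ∧ y ≠ 0 then y + 1 else 0

lemma chainStep_zero (m : ℕ) (u : Bool) : chainStep m 0 u = 0 := by
  simp [chainStep]

lemma chainStep_false (m : ℕ) (y : Fin (m + 1)) : chainStep m y false = 0 := by
  simp [chainStep]

lemma val_detTraj_chainStep (m : ℕ) {k : ℕ} (hk : k ≤ m) :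
    (detTraj (chainStep m) (fun _ => true) 1 k).val = (k + 1) % (m + 1) := by
  induction k with
  | zero => exact Fin.val_one' (m + 1)
  | succ k ih =>
    have hval : (detTraj (chainStep m) (fun _ => true) 1 k).val = k + 1 := by
      rw [ih (by omega), Nat.mod_eq_of_lt (by omega)]
    have hne : detTraj (chainStep m) (fun _ => true) 1 k ≠ 0 := by
      simp [Fin.ext_iff, hval]
    simp only [detTraj, chainStep, hne, true_and, if_true, ne_eq, not_false_eq_true]
    rw [Fin.val_add, hval, Fin.val_one']
    simp

lemma detTraj_chainStep_eq_zero_iff (m : ℕ) {k : ℕ} (hk : k ≤ m) :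
    detTraj (chainStep m) (fun _ => true) 1 k = 0 ↔ k = m := by
  rw [Fin.ext_iff, val_detTraj_chainStep m hk, Fin.val_zero]
  rcases hk.lt_or_eq with hk | rfl
  · rw [Nat.mod_eq_of_lt (by omega)]
    omega
  · simp

theorem no_uniform_rollout_bound_general (C : ℝ) :
    ∃ (X U : Type) (_ : Finite X) (_ : Finite U) (t : X) (Ua : X → Set U)
      (F : X → U → X) (f : X → U → ℝ) (Vstar V : X → ℝ) (πR : X → U) (x : X)
      (ε : ℝ) (n : ℕ),
      0 < ε ∧
      (∀ y, (Ua y).Nonempty) ∧ (∀ y u, 0 ≤ f y u) ∧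
      (∀ u, F t u = t) ∧ (∀ u, f t u = 0) ∧
      -- V* : the optimal value, satisfying the deterministic Bellman equation
      Vstar t = 0 ∧
      (∀ y, y ≠ t → Vstar y = ⨅ u : Ua y, (f y (u : U) + Vstar (F y (u : U)))) ∧
      -- the value surrogate V
      V t = 0 ∧ (∀ y, |V y - Vstar y| ≤ ε) ∧
      -- π_R : a rollout (one-step greedy) policy for V
      (∀ y, πR y ∈ Ua y) ∧
      (∀ y, y ≠ t → ∀ u ∈ Ua y, f y (πR y) + V (F y (πR y)) ≤ f y u + V (F y u)) ∧
      -- the closed loop from x is proper with hitting time n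
      detTraj F πR x n = t ∧ (∀ k < n, detTraj F πR x k ≠ t) ∧
      -- suboptimality strictly exceeds C ε
      C * ε
        < (∑ k ∈ Finset.range n,
            f (detTraj F πR x k) (πR (detTraj F πR x k))) - Vstar x := by
  set m := ⌊C⌋₊ + 2
  have hit : detTraj (chainStep m) (fun _ => true) 1 m = 0 :=
    (detTraj_chainStep_eq_zero_iff m le_rfl).2 rfl
  have before : ∀ k < m, detTraj (chainStep m) (fun _ => true) 1 k ≠ 0 := fun k hk h =>
    hk.ne ((detTraj_chainStep_eq_zero_iff m hk.le).1 h)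
  refine ⟨Fin (m + 1), Bool, inferInstance, inferInstance, 0, fun _ => Set.univ, chainStep m,
    arrivalCost (chainStep m) 0, fun _ => 0, arrivalBonus 0, fun _ => true, 1, 1, m,
    one_pos, fun _ => Set.univ_nonempty, arrivalCost_nonneg, chainStep_zero m,
    fun u => arrivalCost_eq_zero (chainStep_zero m u), rfl, fun y _ => ?_, if_pos rfl,
    fun y => by simpa using abs_arrivalBonus_le_one y, fun _ => trivial, fun y _ u _ => ?_,
    hit, before, ?_⟩
  · simpa using (iInf_arrivalCost_eq_zero (Set.mem_univ false) (chainStep_false m y)).symm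
  · rw [arrivalCost_add_arrivalBonus, arrivalCost_add_arrivalBonus]
  · rw [sum_arrivalCost_detTraj hit before]
    have hC := Nat.lt_floor_add_one C
    push_cast [m]
    linarith

/-- No uniform bound `J^{π_R}(x) - V*(x) ≤ C ε` can hold over all SSPs with a universal
constant `C` independent of the rollout hitting time: for every `C ≥ 0` there exist a
deterministic SSP, an initial state `x`, an `ε > 0`, and a surrogate `V` with `V(t) = 0` and
`‖V - V*‖∞ ≤ ε`, such that the rollout policy `π_R` built from `V` is proper from `x` and
`J^{π_R}(x) - V*(x) > C ε`. -/
theorem no_uniform_rollout_bound (C : ℝ) (hC : 0 ≤ C) :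
    ∃ (X U : Type) (_ : Finite X) (_ : Finite U) (t : X) (Ua : X → Set U)
      (F : X → U → X) (f : X → U → ℝ) (Vstar V : X → ℝ) (πR : X → U) (x : X)
      (ε : ℝ) (n : ℕ),
      0 < ε ∧
      (∀ y, (Ua y).Nonempty) ∧ (∀ y u, 0 ≤ f y u) ∧
      (∀ u, F t u = t) ∧ (∀ u, f t u = 0) ∧
      -- V* : the optimal value, satisfying the deterministic Bellman equation
      Vstar t = 0 ∧
      (∀ y, y ≠ t → Vstar y = ⨅ u : Ua y, (f y (u : U) + Vstar (F y (u : U)))) ∧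
      -- the value surrogate V
      V t = 0 ∧ (∀ y, |V y - Vstar y| ≤ ε) ∧
      -- π_R : a rollout (one-step greedy) policy for V
      (∀ y, πR y ∈ Ua y) ∧
      (∀ y, y ≠ t → ∀ u ∈ Ua y, f y (πR y) + V (F y (πR y)) ≤ f y u + V (F y u)) ∧
      -- the closed loop from x is proper with hitting time n
      detTraj F πR x n = t ∧ (∀ k < n, detTraj F πR x k ≠ t) ∧
      -- suboptimality strictly exceeds C ε
      C * ε
        < (∑ k ∈ Finset.range n,
            f (detTraj F πR x k) (πR (detTraj F πR x k))) - Vstar x :=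
  no_uniform_rollout_bound_general C
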